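/- Let H° = {z ∈ (ℂ*)^{n+1} : z_1 + ... + z_{n+1} + 1 = 0}. Then the primitive complex Σ_n (the corner locus of max{0, x_1, ..., x_{n+1}}) is contained in the amoeba Log(H°). -/

import Mathlib

/-!
A point `x` lies in the amoeba as soon as the lengths `1, exp x₁, …, exp xₙ₊₁` are the side lengths
of a closed polygon in `ℂ`: dividing the sides by the one of length `1` gives a point of `H°`.
If the largest length `R` occurs twice, give the other sides real directions `±1`, chosen greedily
so that their sum `T` satisfies `|T| ≤ R`; the two sides of length `R` are then taken to be `u` and
`conj u` with `‖u‖ = R` and `2 Re u = -T`, which closes the polygon.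
-/

open Finset

theorem exists_abs_eq_and_abs_sum_le {ι : Type*} [DecidableEq ι] (s : Finset ι) (r : ι → ℝ) {M : ℝ}
    (hM : 0 ≤ M) (hr : ∀ k ∈ s, 0 ≤ r k ∧ r k ≤ M) :
    ∃ v : ι → ℝ, (∀ k ∈ s, |v k| = r k) ∧ |∑ k ∈ s, v k| ≤ M := by
  induction s using Finset.induction_on with
  | empty => exact ⟨0, by simp, by simpa using hM⟩
  | @insert a s ha ih =>
    obtain ⟨v, hv, hsum⟩ := ih fun k hk => hr k (mem_insert_of_mem hk)
    obtain ⟨hra, hraM⟩ := hr a (mem_insert_self a s)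
    set t := ∑ k ∈ s, v k
    let σ : ℝ := if 0 ≤ t then -1 else 1
    have hv_upd : ∀ k ∈ s, Function.update v a (σ * r a) k = v k := fun k hk =>
      Function.update_of_ne (ne_of_mem_of_not_mem hk ha) _ _
    refine ⟨Function.update v a (σ * r a), fun k hk => ?_, ?_⟩
    · rcases mem_insert.1 hk with rfl | hk
      · simp only [Function.update_self, σ]
        split_ifs <;> simp [abs_of_nonneg hra]
      · rw [hv_upd k hk, hv k hk]
    · rw [sum_insert ha, Function.update_self, sum_congr rfl hv_upd, abs_le]
      rw [abs_le] at hsum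
      simp only [σ]
      split_ifs with ht <;> constructor <;> linarith

theorem Complex.exists_norm_eq_re_eq {R t : ℝ} (ht : |t| ≤ R) : ∃ u : ℂ, ‖u‖ = R ∧ u.re = t := by
  have hR : 0 ≤ R := (abs_nonneg t).trans ht
  have ht2 : t ^ 2 ≤ R ^ 2 := sq_le_sq' (abs_le.1 ht).1 (abs_le.1 ht).2
  refine ⟨⟨t, √(R ^ 2 - t ^ 2)⟩, ?_, rfl⟩
  rw [Complex.norm_eq_sqrt_sq_add_sq, Real.sq_sqrt (sub_nonneg.2 ht2), add_sub_cancel,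
    Real.sqrt_sq hR]

theorem exists_norm_eq_sum_eq_zero_of_max_attained_twice {ι : Type*} [Fintype ι] [DecidableEq ι]
    (r : ι → ℝ) (hr : ∀ k, 0 ≤ r k) {i j : ι} (hij : i ≠ j) (hmax : ∀ k, r k ≤ r i)
    (hji : r j = r i) : ∃ w : ι → ℂ, (∀ k, ‖w k‖ = r k) ∧ ∑ k, w k = 0 := by
  set s : Finset ι := (univ.erase i).erase j
  have hmem : ∀ {k}, k ∈ s ↔ k ≠ j ∧ k ≠ i := by simp [s]
  obtain ⟨v, hv, hsum⟩ := exists_abs_eq_and_abs_sum_le s r (hr i) fun k _ => ⟨hr k, hmax k⟩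
  obtain ⟨u, hu, hre⟩ := Complex.exists_norm_eq_re_eq (R := 2 * r i) (t := -∑ k ∈ s, v k)
    (by rw [abs_neg]; linarith [hr i])
  let w : ι → ℂ := fun k => if k = i then u / 2 else if k = j then starRingEnd ℂ (u / 2) else v k
  refine ⟨w, fun k => ?_, ?_⟩
  · by_cases hki : k = i
    · simp [w, hki, hu]
    by_cases hkj : k = j
    · simp [w, hkj, hij.symm, hu, hji]
    · simp [w, hki, hkj, hv k (hmem.2 ⟨hkj, hki⟩)]
  · rw [← add_sum_erase _ _ (mem_univ i), ← add_sum_erase _ _ (mem_erase.2 ⟨hij.symm, mem_univ j⟩)]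
    have hs : ∑ k ∈ s, w k = ((∑ k ∈ s, v k : ℝ) : ℂ) := by
      push_cast
      refine sum_congr rfl fun k hk => ?_
      obtain ⟨hkj, hki⟩ := hmem.1 hk
      simp [w, hki, hkj]
    have hconj : w i + w j = ((-∑ k ∈ s, v k : ℝ) : ℂ) := by
      simp only [w, if_pos, if_neg hij.symm, Complex.add_conj, Complex.div_ofNat_re, hre]
      push_cast; ring
    rw [hs, ← add_assoc, hconj]
    push_cast; ring

theorem stmt_16 (n : ℕ) :
    {x : Fin (n + 1) → ℝ | ∃ i j : Fin (n + 2), i ≠ j ∧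
        (Fin.cases (motive := fun _ => ℝ) (0 : ℝ) x i
          = Finset.univ.sup' Finset.univ_nonempty (fun k : Fin (n + 2) => Fin.cases (motive := fun _ => ℝ) (0 : ℝ) x k)) ∧
        (Fin.cases (motive := fun _ => ℝ) (0 : ℝ) x j
          = Finset.univ.sup' Finset.univ_nonempty (fun k : Fin (n + 2) => Fin.cases (motive := fun _ => ℝ) (0 : ℝ) x k))}
      ⊆ (fun z : Fin (n + 1) → ℂ => fun i => Real.log ‖z i‖) ''
          {z : Fin (n + 1) → ℂ | (∀ i, z i ≠ 0) ∧ (∑ i, z i) + 1 = 0} := by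
  rintro x ⟨i, j, hij, hi, hj⟩
  set f : Fin (n + 2) → ℝ := Fin.cases (motive := fun _ => ℝ) (0 : ℝ) x
  have hmax : ∀ k, Real.exp (f k) ≤ Real.exp (f i) := fun k =>
    Real.exp_le_exp.2 (hi ▸ le_sup' f (mem_univ k))
  obtain ⟨w, hw, hsum⟩ := exists_norm_eq_sum_eq_zero_of_max_attained_twice (fun k => Real.exp (f k))
    (fun k => (Real.exp_pos _).le) hij hmax (by rw [hi, hj])
  have hne : ∀ k, w k ≠ 0 := fun k => norm_ne_zero_iff.1 (by rw [hw]; exact (Real.exp_pos _).ne')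
  refine ⟨fun m => w m.succ / w 0, ⟨fun m => div_ne_zero (hne _) (hne 0), ?_⟩, ?_⟩
  · rw [← sum_div, div_add_one (hne 0), add_comm, ← Fin.sum_univ_succ, hsum, zero_div]
  · funext m
    simp only [norm_div, hw]
    simp [f]
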